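/- Let F be a continuous CDF, X_1, …, X_n i.i.d. with CDF F, 𝔽_n the empirical CDF, and define D_n^{(1)} = √n sup_{t < X_{(1)}} |𝔽_n(t) − F(t)| and D_n^{(3)} = √n sup_{t ≥ X_{(n)}} |𝔽_n(t) − F(t)|. Then D_n^{(1)} has the same distribution as √n U_{(1)} and D_n^{(3)} has the same distribution as √n (1 − U_{(n)}), where U_{(1)}, U_{(n)} are extreme order statistics of a uniform sample of size n; hence both converge to 0 in probability. -/

import Mathlib

open MeasureTheory ProbabilityTheory Filter Real Set

open scoped Topology

/-!
Below the smallest observation `𝔽_n` vanishes and from the largest one on it equals `1`, so, `F`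
being a continuous monotone function with values in `[0, 1]`, `D_n^{(1)} = √n F(X_{(1)}) =
√n min_i F(X_i)` and `D_n^{(3)} = √n (1 - max_i F(X_i))`. As `F` is continuous, each `F(X_i)` is
uniform on `(0, 1)` (probability integral transform), so by independence `(F(X_i))_{i<n}` and
`(U_i)_{i<n}` have the same joint law, which gives both distributional identities. Finally
`P(√n U_{(1)} ≥ ε) = P(√n (1 - U_{(n)}) ≥ ε) = (1 - ε/√n)^n ≤ exp(-ε√n) → 0`.
-/

lemma volume_restrict_Ioo_Iic (s : ℝ) :
    volume.restrict (Ioo (0 : ℝ) 1) (Iic s) = ENNReal.ofReal (min s 1) := by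
  rw [Measure.restrict_congr_set Ioo_ae_eq_Ioc, Measure.restrict_apply measurableSet_Iic,
    inter_comm, Ioc_inter_Iic, Real.volume_Ioc, sub_zero, min_comm]

lemma volume_restrict_Ioo_Ici {s : ℝ} (hs : 0 < s) :
    volume.restrict (Ioo (0 : ℝ) 1) (Ici s) = ENNReal.ofReal (1 - s) := by
  rw [Measure.restrict_congr_set Ioo_ae_eq_Ico, Measure.restrict_apply measurableSet_Ici,
    inter_comm, Ico_inter_Ici, Real.volume_Ico, max_eq_right hs.le]

lemma cdf_map_eq {Ω : Type*} [MeasurableSpace Ω] {μ : Measure Ω} [IsProbabilityMeasure μ]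
    {Y : Ω → ℝ} (hY : Measurable Y) {F : ℝ → ℝ} (hF : ∀ t, (μ {ω | Y ω ≤ t}).toReal = F t) :
    ⇑(cdf (μ.map Y)) = F := by
  have := Measure.isProbabilityMeasure_map (μ := μ) hY.aemeasurable
  ext t
  rw [cdf_eq_real, map_measureReal_apply hY measurableSet_Iic]
  exact hF t

lemma exists_preimage_Iic_eq_Iic {F : ℝ → ℝ} (hc : Continuous F) (hm : Monotone F) {s T : ℝ}
    (hT : s < F T) (hne : (F ⁻¹' Iic s).Nonempty) : ∃ b, F b = s ∧ F ⁻¹' Iic s = Iic b := by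
  have hbdd : BddAbove (F ⁻¹' Iic s) :=
    ⟨T, fun t (ht : F t ≤ s) => (hm.reflect_lt (ht.trans_lt hT)).le⟩
  set b := sSup (F ⁻¹' Iic s)
  have hb : F b ≤ s := (isClosed_Iic.preimage hc).csSup_mem hne hbdd
  obtain ⟨c, -, hc⟩ := intermediate_value_Icc (hm.reflect_lt (hb.trans_lt hT)).le
    hc.continuousOn ⟨hb, hT.le⟩
  refine ⟨b, hb.antisymm (hc ▸ hm (le_csSup hbdd (show F c ≤ s from hc.le))), ?_⟩
  ext t
  exact ⟨fun ht => le_csSup hbdd ht, fun ht => (hm ht).trans hb⟩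

theorem map_cdf_eq_volume_restrict_Ioo {ν : Measure ℝ} [IsProbabilityMeasure ν]
    (hc : Continuous (cdf ν)) : ν.map (cdf ν) = volume.restrict (Ioo 0 1) := by
  refine Measure.ext_of_Iic _ _ fun s => ?_
  rw [Measure.map_apply (monotone_cdf ν).measurable measurableSet_Iic, volume_restrict_Ioo_Iic]
  rcases le_or_gt 1 s with h1 | h1
  · have huniv : cdf ν ⁻¹' Iic s = univ := eq_univ_of_forall fun t => (cdf_le_one ν t).trans h1
    rw [huniv, measure_univ, min_eq_right h1, ENNReal.ofReal_one]
  rcases (cdf ν ⁻¹' Iic s).eq_empty_or_nonempty with hemp | hne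
  · have hs : s ≤ 0 := ge_of_tendsto (tendsto_cdf_atBot ν) (Eventually.of_forall fun t =>
      le_of_lt (not_le.1 fun ht => (eq_empty_iff_forall_notMem.1 hemp) t ht))
    rw [hemp, measure_empty, ENNReal.ofReal_eq_zero.2 ((min_le_left _ _).trans hs)]
  · obtain ⟨T, hT⟩ := ((tendsto_cdf_atTop ν).eventually (eventually_gt_nhds h1)).exists
    obtain ⟨b, hb, hpre⟩ := exists_preimage_Iic_eq_Iic hc (monotone_cdf ν) hT hne
    rw [hpre, ← ofReal_cdf, hb, min_eq_left h1.le]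

section Independence

variable {Ω Ω' ι : Type*} [MeasurableSpace Ω] [MeasurableSpace Ω'] [Fintype ι]
  {μ : Measure Ω} {μ' : Measure Ω'}

theorem identDistrib_comp_of_cdf_eq [IsProbabilityMeasure μ] {Y : Ω → ℝ} (hY : Measurable Y)
    {F : ℝ → ℝ} (hF : Continuous F) (hcdf : ⇑(cdf (μ.map Y)) = F) {V : Ω' → ℝ}
    (hV : Measurable V) (hVlaw : μ'.map V = volume.restrict (Ioo 0 1)) :
    IdentDistrib (fun ω => F (Y ω)) V μ μ' where
  aemeasurable_fst := (hF.measurable.comp hY).aemeasurable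
  aemeasurable_snd := hV.aemeasurable
  map_eq := by
    have := Measure.isProbabilityMeasure_map (μ := μ) hY.aemeasurable
    rw [hVlaw, ← map_cdf_eq_volume_restrict_Ioo (hcdf ▸ hF), hcdf,
      Measure.map_map hF.measurable hY]
    rfl

theorem identDistrib_pi_of_iIndepFun {β : ι → Type*} [∀ i, MeasurableSpace (β i)]
    {Y : ∀ i, Ω → β i} {Z : ∀ i, Ω' → β i} (hY : iIndepFun Y μ) (hZ : iIndepFun Z μ')
    (h : ∀ i, IdentDistrib (Y i) (Z i) μ μ') :
    IdentDistrib (fun ω i => Y i ω) (fun ω i => Z i ω) μ μ' where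
  aemeasurable_fst := aemeasurable_pi_lambda _ fun i => (h i).aemeasurable_fst
  aemeasurable_snd := aemeasurable_pi_lambda _ fun i => (h i).aemeasurable_snd
  map_eq := by
    rw [hY.map_fun_eq_pi_map fun i => (h i).aemeasurable_fst,
      hZ.map_fun_eq_pi_map fun i => (h i).aemeasurable_snd]
    simp_rw [(h _).map_eq]

lemma measure_iInter_preimage_eq_pow {β : Type*} [MeasurableSpace β] {Y : ι → Ω → β}
    {ν : Measure β} (hY : iIndepFun Y μ) (hYm : ∀ i, Measurable (Y i)) (hlaw : ∀ i, μ.map (Y i) = ν)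
    {B : Set β} (hB : MeasurableSet B) : μ (⋂ i, Y i ⁻¹' B) = ν B ^ Fintype.card ι := by
  classical
  have h := hY.measure_inter_preimage_eq_mul Finset.univ (sets := fun _ => B) fun _ _ => hB
  simp only [Finset.mem_univ, iInter_true] at h
  simp_rw [h, ← Measure.map_apply (hYm _) hB, hlaw, Finset.prod_const, Finset.card_univ]

variable [Nonempty ι] {U : ι → Ω → ℝ} (hU : iIndepFun U μ) (hUm : ∀ i, Measurable (U i))
  (hlaw : ∀ i, μ.map (U i) = volume.restrict (Ioo 0 1))
include hU hUm hlaw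

lemma measure_le_mul_iInf_of_uniform {ε c : ℝ} (hε : 0 < ε) (hc : 0 < c) :
    μ {ω | ε ≤ c * ⨅ i, U i ω} = ENNReal.ofReal (1 - ε / c) ^ Fintype.card ι := by
  have hset : {ω | ε ≤ c * ⨅ i, U i ω} = ⋂ i, U i ⁻¹' Ici (ε / c) := by
    ext ω
    simp only [mem_ofPred_eq, mem_iInter, mem_preimage, mem_Ici]
    rw [← div_le_iff₀' hc, le_ciInf_iff (finite_range _).bddBelow]
  rw [hset, measure_iInter_preimage_eq_pow hU hUm hlaw measurableSet_Ici,
    volume_restrict_Ioo_Ici (div_pos hε hc)]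

lemma measure_le_mul_one_sub_iSup_of_uniform {ε c : ℝ} (hε : 0 < ε) (hc : 0 < c) :
    μ {ω | ε ≤ c * (1 - ⨆ i, U i ω)} = ENNReal.ofReal (1 - ε / c) ^ Fintype.card ι := by
  have hset : {ω | ε ≤ c * (1 - ⨆ i, U i ω)} = ⋂ i, U i ⁻¹' Iic (1 - ε / c) := by
    ext ω
    simp only [mem_ofPred_eq, mem_iInter, mem_preimage, mem_Iic]
    rw [← div_le_iff₀' hc, le_sub_comm, ciSup_le_iff (finite_range _).bddAbove]
  rw [hset, measure_iInter_preimage_eq_pow hU hUm hlaw measurableSet_Iic,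
    volume_restrict_Ioo_Iic, min_eq_left (by linarith [div_pos hε hc])]

end Independence

theorem identDistrib_cdf_comp_pi_of_uniform {Ω Ω' : Type*} [MeasurableSpace Ω]
    [MeasurableSpace Ω'] {μ : Measure Ω} [IsProbabilityMeasure μ] {μ' : Measure Ω'}
    {F : ℝ → ℝ} (hF : Continuous F) {X : ℕ → Ω → ℝ} (hXm : ∀ i, Measurable (X i))
    (hX : iIndepFun X μ) (hXcdf : ∀ i t, (μ {ω | X i ω ≤ t}).toReal = F t)
    {U : ℕ → Ω' → ℝ} (hUm : ∀ i, Measurable (U i)) (hU : iIndepFun U μ')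
    (hlaw : ∀ i, μ'.map (U i) = volume.restrict (Ioo 0 1)) (n : ℕ) :
    IdentDistrib (fun ω (i : Fin n) => F (X i ω)) (fun ω' i => U i ω') μ μ' :=
  identDistrib_pi_of_iIndepFun
    ((hX.comp (fun _ => F) fun _ => hF.measurable).precomp Fin.val_injective)
    (hU.precomp Fin.val_injective) fun i =>
      identDistrib_comp_of_cdf_eq (hXm i) hF (cdf_map_eq (hXm i) (hXcdf i)) (hUm i) (hlaw i)

lemma tendsto_ofReal_one_sub_div_sqrt_pow {ε : ℝ} (hε : 0 < ε) :
    Tendsto (fun n : ℕ => (ENNReal.ofReal (1 - ε / √n) ^ n).toReal) atTop (𝓝 0) := by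
  have hexp : Tendsto (fun n : ℕ => exp (-(ε * √n))) atTop (𝓝 0) :=
    tendsto_exp_atBot.comp <| tendsto_neg_atTop_atBot.comp <|
      (tendsto_sqrt_atTop.comp tendsto_natCast_atTop_atTop).const_mul_atTop hε
  refine squeeze_zero (fun n => ENNReal.toReal_nonneg) (fun n => ?_) hexp
  calc (ENNReal.ofReal (1 - ε / √n) ^ n).toReal = max (1 - ε / √n) 0 ^ n := by
        rw [ENNReal.toReal_pow, ENNReal.toReal_ofReal']
    _ ≤ exp (-(ε / √n)) ^ n :=
        pow_le_pow_left₀ (le_max_right _ _)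
          (max_le (by linarith [add_one_le_exp (-(ε / √n))]) (exp_pos _).le) n
    _ = exp (-(ε * √n)) := by
        rw [← exp_nat_mul, mul_neg, mul_div_left_comm, div_sqrt]

section UniformSample

variable {Ω : Type*} [MeasurableSpace Ω] {μ : Measure Ω} {U : ℕ → Ω → ℝ}
  (hU : iIndepFun U μ) (hUm : ∀ i, Measurable (U i))
  (hlaw : ∀ i, μ.map (U i) = volume.restrict (Ioo 0 1))
include hU hUm hlaw

lemma tendsto_measure_le_sqrt_mul_iInf_of_uniform {ε : ℝ} (hε : 0 < ε) :
    Tendsto (fun n : ℕ => (μ {ω | ε ≤ √n * ⨅ i : Fin n, U i ω}).toReal) atTop (𝓝 0) := by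
  refine (tendsto_ofReal_one_sub_div_sqrt_pow hε).congr' <|
    (eventually_ne_atTop 0).mono fun n hn => ?_
  have : NeZero n := ⟨hn⟩
  have h := measure_le_mul_iInf_of_uniform (hU.precomp (Fin.val_injective (n := n)))
    (fun i => hUm i) (fun i => hlaw i) hε (sqrt_pos.2 (Nat.cast_pos.2 (Nat.pos_of_ne_zero hn)))
  rw [Fintype.card_fin] at h
  exact congrArg ENNReal.toReal h.symm

lemma tendsto_measure_le_sqrt_mul_one_sub_iSup_of_uniform {ε : ℝ} (hε : 0 < ε) :
    Tendsto (fun n : ℕ => (μ {ω | ε ≤ √n * (1 - ⨆ i : Fin n, U i ω)}).toReal) atTop (𝓝 0) := by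
  refine (tendsto_ofReal_one_sub_div_sqrt_pow hε).congr' <|
    (eventually_ne_atTop 0).mono fun n hn => ?_
  have : NeZero n := ⟨hn⟩
  have h := measure_le_mul_one_sub_iSup_of_uniform (hU.precomp (Fin.val_injective (n := n)))
    (fun i => hUm i) (fun i => hlaw i) hε (sqrt_pos.2 (Nat.cast_pos.2 (Nat.pos_of_ne_zero hn)))
  rw [Fintype.card_fin] at h
  exact congrArg ENNReal.toReal h.symm

end UniformSample

noncomputable def empiricalCDF (x : ℕ → ℝ) (n : ℕ) (t : ℝ) : ℝ :=
  (n : ℝ)⁻¹ * ∑ i ∈ Finset.range n, if x i ≤ t then 1 else 0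

section EmpiricalCDF

variable {x : ℕ → ℝ} {n : ℕ} {t : ℝ}

lemma empiricalCDF_eq_zero_of_lt_iInf (ht : t < ⨅ i : Fin n, x i) : empiricalCDF x n t = 0 :=
  mul_eq_zero_of_right _ <| Finset.sum_eq_zero fun i hi => if_neg <| not_le.2 <|
    ht.trans_le (ciInf_le (finite_range _).bddBelow (⟨i, Finset.mem_range.1 hi⟩ : Fin n))

lemma empiricalCDF_eq_one_of_iSup_le [NeZero n] (ht : ⨆ i : Fin n, x i ≤ t) :
    empiricalCDF x n t = 1 := by
  rw [empiricalCDF, Finset.sum_congr rfl fun i hi => if_pos <|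
    (le_ciSup (finite_range _).bddAbove (⟨i, Finset.mem_range.1 hi⟩ : Fin n)).trans ht]
  simp [NeZero.ne]

end EmpiricalCDF

section EmpiricalCDFDeviation

variable {F : ℝ → ℝ} (hc : Continuous F) (hm : Monotone F)
include hc hm

lemma sSup_abs_empiricalCDF_sub_Iio_iInf (h0 : ∀ t, 0 ≤ F t) (x : ℕ → ℝ) (n : ℕ) [NeZero n] :
    sSup ((fun t => |empiricalCDF x n t - F t|) '' Iio (⨅ i : Fin n, x i)) =
      ⨅ i : Fin n, F (x i) := by
  have himg : (fun t => |empiricalCDF x n t - F t|) '' Iio (⨅ i : Fin n, x i) =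
      F '' Iio (⨅ i : Fin n, x i) := image_congr fun t ht => by
    rw [empiricalCDF_eq_zero_of_lt_iInf ht, zero_sub, abs_neg, abs_of_nonneg (h0 t)]
  rw [himg, ← hm.map_csSup_of_continuousAt hc.continuousAt nonempty_Iio bddAbove_Iio, csSup_Iio,
    hm.map_ciInf_of_continuousAt hc.continuousAt (finite_range _).bddBelow]

lemma sSup_abs_empiricalCDF_sub_Ici_iSup (h1 : ∀ t, F t ≤ 1) (x : ℕ → ℝ) (n : ℕ) [NeZero n] :
    sSup ((fun t => |empiricalCDF x n t - F t|) '' Ici (⨆ i : Fin n, x i)) =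
      1 - ⨆ i : Fin n, F (x i) := by
  have himg : (fun t => |empiricalCDF x n t - F t|) '' Ici (⨆ i : Fin n, x i) =
      (fun t => 1 - F t) '' Ici (⨆ i : Fin n, x i) := image_congr fun t ht => by
    rw [empiricalCDF_eq_one_of_iSup_le ht, abs_of_nonneg (sub_nonneg.2 (h1 t))]
  have hanti : Antitone fun t => 1 - F t := fun _ _ h => sub_le_sub_left (hm h) 1
  rw [himg, (hanti.map_isLeast isLeast_Ici).csSup_eq,
    hm.map_ciSup_of_continuousAt hc.continuousAt (finite_range _).bddAbove]

end EmpiricalCDFDeviation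

theorem ks_tail_pieces_general {Ω Ω' : Type*} [MeasurableSpace Ω] [MeasurableSpace Ω']
    (μ : Measure Ω) [IsProbabilityMeasure μ]
    (μ' : Measure Ω') [IsProbabilityMeasure μ']
    (F : ℝ → ℝ) (hFcont : Continuous F)
    (X : ℕ → Ω → ℝ) (hXmeas : ∀ i, Measurable (X i))
    (hXindep : iIndepFun X μ)
    (hXcdf : ∀ i t, (μ {ω | X i ω ≤ t}).toReal = F t)
    (U : ℕ → Ω' → ℝ) (hUmeas : ∀ i, Measurable (U i))
    (hUindep : iIndepFun U μ')
    (hUdist : ∀ i, Measure.map (U i) μ' = MeasureTheory.volume.restrict (Set.Ioo (0:ℝ) 1))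
    (Fn : ℕ → ℝ → Ω → ℝ)
    (hFn : ∀ n t ω, Fn n t ω =
      (↑n)⁻¹ * ∑ i ∈ Finset.range n, (if X i ω ≤ t then (1:ℝ) else 0))
    (D1 D3 : ℕ → Ω → ℝ)
    (hD1 : ∀ n ω, D1 n ω =
      Real.sqrt n * sSup ((fun t => |Fn n t ω - F t|) '' Set.Iio (⨅ i : Fin n, X i ω)))
    (hD3 : ∀ n ω, D3 n ω =
      Real.sqrt n * sSup ((fun t => |Fn n t ω - F t|) '' Set.Ici (⨆ i : Fin n, X i ω))) :
    (∀ n : ℕ, 1 ≤ n →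
      Measure.map (D1 n) μ =
        Measure.map (fun ω' => Real.sqrt n * (⨅ i : Fin n, U i ω')) μ' ∧
      Measure.map (D3 n) μ =
        Measure.map (fun ω' => Real.sqrt n * (1 - ⨆ i : Fin n, U i ω')) μ') ∧
    (∀ ε : ℝ, 0 < ε →
      Tendsto (fun n : ℕ => (μ {ω | ε ≤ D1 n ω}).toReal) atTop (nhds 0) ∧
      Tendsto (fun n : ℕ => (μ {ω | ε ≤ D3 n ω}).toReal) atTop (nhds 0)) := by
  have hcdf : ⇑(cdf (μ.map (X 0))) = F := cdf_map_eq (hXmeas 0) (hXcdf 0)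
  have hFmono : Monotone F := hcdf ▸ monotone_cdf _
  have hjoint := identDistrib_cdf_comp_pi_of_uniform hFcont hXmeas hXindep hXcdf hUmeas hUindep
    hUdist
  have hD1law (n : ℕ) (hn : n ≠ 0) :
      IdentDistrib (D1 n) (fun ω' => √n * ⨅ i : Fin n, U i ω') μ μ' := by
    have : NeZero n := ⟨hn⟩
    have hD1F : D1 n = (fun v : Fin n → ℝ => √n * ⨅ i, v i) ∘ fun ω i => F (X i ω) := by
      funext ω
      simp only [hD1, hFn, Function.comp_apply]
      exact congrArg _ (sSup_abs_empiricalCDF_sub_Iio_iInf hFcont hFmono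
        (hcdf ▸ cdf_nonneg _) (X · ω) n)
    rw [hD1F]
    exact (hjoint n).comp (measurable_const.mul (Measurable.iInf measurable_pi_apply))
  have hD3law (n : ℕ) (hn : n ≠ 0) :
      IdentDistrib (D3 n) (fun ω' => √n * (1 - ⨆ i : Fin n, U i ω')) μ μ' := by
    have : NeZero n := ⟨hn⟩
    have hD3F : D3 n = (fun v : Fin n → ℝ => √n * (1 - ⨆ i, v i)) ∘ fun ω i => F (X i ω) := by
      funext ω
      simp only [hD3, hFn, Function.comp_apply]
      exact congrArg _ (sSup_abs_empiricalCDF_sub_Ici_iSup hFcont hFmono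
        (hcdf ▸ cdf_le_one _) (X · ω) n)
    rw [hD3F]
    exact (hjoint n).comp
      (measurable_const.mul (measurable_const.sub (Measurable.iSup measurable_pi_apply)))
  refine ⟨fun n hn => ⟨(hD1law n (by omega)).map_eq, (hD3law n (by omega)).map_eq⟩,
    fun ε hε => ⟨?_, ?_⟩⟩
  · refine (tendsto_measure_le_sqrt_mul_iInf_of_uniform hUindep hUmeas hUdist hε).congr' <|
      (eventually_ne_atTop 0).mono fun n hn => ?_
    exact congrArg _ ((hD1law n hn).measure_mem_eq measurableSet_Ici).symm
  · refine (tendsto_measure_le_sqrt_mul_one_sub_iSup_of_uniform hUindep hUmeas hUdist hε).congr' <|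
      (eventually_ne_atTop 0).mono fun n hn => ?_
    exact congrArg _ ((hD3law n hn).measure_mem_eq measurableSet_Ici).symm

theorem ks_tail_pieces {Ω Ω' : Type*} [MeasurableSpace Ω] [MeasurableSpace Ω']
    (μ : Measure Ω) [IsProbabilityMeasure μ]
    (μ' : Measure Ω') [IsProbabilityMeasure μ']
    (F : ℝ → ℝ) (hFcont : Continuous F) (hFmono : Monotone F)
    (hF0 : Tendsto F atBot (nhds 0)) (hF1 : Tendsto F atTop (nhds 1))
    (X : ℕ → Ω → ℝ) (hXmeas : ∀ i, Measurable (X i))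
    (hXindep : iIndepFun X μ)
    (hXcdf : ∀ i t, (μ {ω | X i ω ≤ t}).toReal = F t)
    (U : ℕ → Ω' → ℝ) (hUmeas : ∀ i, Measurable (U i))
    (hUindep : iIndepFun U μ')
    (hUdist : ∀ i, Measure.map (U i) μ' = MeasureTheory.volume.restrict (Set.Ioo (0:ℝ) 1))
    (Fn : ℕ → ℝ → Ω → ℝ)
    (hFn : ∀ n t ω, Fn n t ω =
      (↑n)⁻¹ * ∑ i ∈ Finset.range n, (if X i ω ≤ t then (1:ℝ) else 0))
    (D1 D3 : ℕ → Ω → ℝ)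
    (hD1 : ∀ n ω, D1 n ω =
      Real.sqrt n * sSup ((fun t => |Fn n t ω - F t|) '' Set.Iio (⨅ i : Fin n, X i ω)))
    (hD3 : ∀ n ω, D3 n ω =
      Real.sqrt n * sSup ((fun t => |Fn n t ω - F t|) '' Set.Ici (⨆ i : Fin n, X i ω))) :
    (∀ n : ℕ, 1 ≤ n →
      Measure.map (D1 n) μ =
        Measure.map (fun ω' => Real.sqrt n * (⨅ i : Fin n, U i ω')) μ' ∧
      Measure.map (D3 n) μ =
        Measure.map (fun ω' => Real.sqrt n * (1 - ⨆ i : Fin n, U i ω')) μ') ∧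
    (∀ ε : ℝ, 0 < ε →
      Tendsto (fun n : ℕ => (μ {ω | ε ≤ D1 n ω}).toReal) atTop (nhds 0) ∧
      Tendsto (fun n : ℕ => (μ {ω | ε ≤ D3 n ω}).toReal) atTop (nhds 0)) :=
  ks_tail_pieces_general μ μ' F hFcont X hXmeas hXindep hXcdf U hUmeas hUindep hUdist Fn hFn D1 D3
    hD1 hD3
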